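/- For every i ≥ 1, every word y with at least i occurrences of `false`, and every word x: ⟨a_{q,i+1} x | y⟩ = ⟨x | a_{q,i}† y⟩, where the left side is 0 if x has fewer than i+1 occurrences of `false`. That is, the *-adjoint of deleting the (i+1)-th anti-pawn is doubling the i-th anti-pawn. -/

import Mathlib

/-- A single pawn move: a pawn (`true`) advances one square rightward into an
empty square (`false`). -/
def PawnMove (w₀ w₁ : List Bool) : Prop :=
  ∃ u v : List Bool, w₀ = u ++ [true, false] ++ v ∧ w₁ = u ++ [false, true] ++ v

/-- Reachability: the reflexive-transitive closure of the single-move relation. -/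
def Reach : List Bool → List Bool → Prop :=
  Relation.ReflTransGen PawnMove

/-- The `ZMod 2` pairing `⟨w₀|w₁⟩`: `1` if `w₁` is reachable from `w₀`, else `0`. -/
noncomputable def pairing (w₀ w₁ : List Bool) : ZMod 2 :=
  open Classical in if Reach w₀ w₁ then 1 else 0

/-- Pairing extended to `Option`: any pairing in which one argument is `0`
(i.e. `none`) equals `0`. -/
noncomputable def pairingO : Option (List Bool) → Option (List Bool) → ZMod 2
  | some x, some y => pairing x y
  | none, _ => 0
  | _, none => 0

/-- `delOcc b i w` deletes the `i`-th occurrence (counted from the left,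
starting at `1`) of `b` in `w`; it is `none` (i.e. `0`) if `w` has fewer than
`i` occurrences of `b`. -/
def delOcc (b : Bool) : ℕ → List Bool → Option (List Bool)
  | _, [] => none
  | i, a :: w =>
    if a = b then
      if i = 1 then some w
      else Option.map (List.cons a) (delOcc b (i - 1) w)
    else Option.map (List.cons a) (delOcc b i w)

/-- `dblOcc b i w` doubles the `i`-th occurrence (counted from the left,
starting at `1`) of `b` in `w`, i.e. inserts an additional `b` immediately
before it; it is `none` (i.e. `0`) if `w` has fewer than `i` occurrences of
`b`. -/
def dblOcc (b : Bool) : ℕ → List Bool → Option (List Bool)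
  | _, [] => none
  | i, a :: w =>
    if a = b then
      if i = 1 then some (b :: a :: w)
      else Option.map (List.cons a) (dblOcc b (i - 1) w)
    else Option.map (List.cons a) (dblOcc b i w)

/-! Reachability has a prefix-count characterisation: `w` reaches `z` iff both have the same
length and the same number of anti-pawns, and every prefix of `z` contains at least as many
anti-pawns as the prefix of `w` of the same length (anti-pawns only ever move left, and any
such configuration can be reached by pulling anti-pawns left one at a time).

Write `x = u ++ false :: v` where `u` holds `i` anti-pawns and `y = s ++ false :: t` where `s`
holds `i - 1`. Deleting the anti-pawn after `u` and doubling the one after `s` change the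
prefix counts of `x` and of `y` in the same way: they are unchanged up to the insertion point
and shifted by one square and one anti-pawn beyond it. Either dominance forces `s` to be no
longer than `u`, and then the two dominance conditions translate into each other. -/

def antipawnCount (w : List Bool) (n : ℕ) : ℕ := (w.take n).count false

section antipawnCount

@[simp] lemma antipawnCount_zero (w : List Bool) : antipawnCount w 0 = 0 := rfl

@[simp] lemma antipawnCount_false_cons (w : List Bool) (n : ℕ) :
    antipawnCount (false :: w) (n + 1) = antipawnCount w n + 1 := by
  simp [antipawnCount]

@[simp] lemma antipawnCount_true_cons (w : List Bool) (n : ℕ) :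
    antipawnCount (true :: w) (n + 1) = antipawnCount w n := by
  simp [antipawnCount]

lemma antipawnCount_mono (w : List Bool) : Monotone (antipawnCount w) := fun _ _ hnm =>
  ((List.take_sublist_take_left hnm).count_le false)

lemma antipawnCount_le_count (w : List Bool) (n : ℕ) : antipawnCount w n ≤ w.count false :=
  (List.take_sublist n w).count_le false

lemma antipawnCount_succ_le (w : List Bool) (n : ℕ) :
    antipawnCount w (n + 1) ≤ antipawnCount w n + 1 := by
  induction w generalizing n with
  | nil => simp [antipawnCount]
  | cons a w ih => cases n <;> cases a <;> simp [ih]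

lemma antipawnCount_append_of_le {u : List Bool} {n : ℕ} (l : List Bool) (h : n ≤ u.length) :
    antipawnCount (u ++ l) n = antipawnCount u n := by
  simp [antipawnCount, List.take_append, Nat.sub_eq_zero_of_le h]

lemma antipawnCount_append_length_add (u l : List Bool) (m : ℕ) :
    antipawnCount (u ++ l) (u.length + m) = u.count false + antipawnCount l m := by
  simp [antipawnCount, List.take_append, List.take_of_length_le]

lemma antipawnCount_append_length (u l : List Bool) :
    antipawnCount (u ++ l) u.length = u.count false := by
  simpa using antipawnCount_append_length_add u l 0

lemma antipawnCount_replicate_true_append (k : ℕ) (w : List Bool) (n : ℕ) :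
    antipawnCount (List.replicate k true ++ w) n = antipawnCount w (n - k) := by
  simp [antipawnCount, List.take_append, List.take_replicate, List.count_replicate]

lemma antipawnCount_insert_of_le {u : List Bool} {n : ℕ} (v : List Bool) (h : n ≤ u.length) :
    antipawnCount (u ++ false :: v) n = antipawnCount (u ++ v) n := by
  rw [antipawnCount_append_of_le _ h, antipawnCount_append_of_le _ h]

lemma antipawnCount_insert_succ {u : List Bool} {n : ℕ} (v : List Bool) (h : u.length ≤ n) :
    antipawnCount (u ++ false :: v) (n + 1) = antipawnCount (u ++ v) n + 1 := by
  obtain ⟨m, rfl⟩ := Nat.exists_eq_add_of_le h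
  rw [Nat.add_assoc, antipawnCount_append_length_add, antipawnCount_append_length_add,
    antipawnCount_false_cons, Nat.add_assoc]

lemma antipawnCount_le_insert (u v : List Bool) (n : ℕ) :
    antipawnCount (u ++ v) n ≤ antipawnCount (u ++ false :: v) n := by
  rcases le_or_gt n u.length with h | h
  · rw [antipawnCount_insert_of_le _ h]
  · obtain ⟨m, rfl⟩ := Nat.exists_eq_add_of_lt h
    rw [antipawnCount_insert_succ _ (by omega)]
    exact antipawnCount_succ_le _ _

end antipawnCount

structure PrefixDom (w z : List Bool) : Prop where
  length_eq : w.length = z.length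
  count_eq : w.count false = z.count false
  antipawnCount_le : ∀ n, antipawnCount w n ≤ antipawnCount z n

namespace PrefixDom

lemma refl (w : List Bool) : PrefixDom w w := ⟨rfl, rfl, fun _ => le_rfl⟩

lemma trans {w₁ w₂ w₃ : List Bool} (h₁₂ : PrefixDom w₁ w₂) (h₂₃ : PrefixDom w₂ w₃) :
    PrefixDom w₁ w₃ :=
  ⟨h₁₂.1.trans h₂₃.1, h₁₂.2.trans h₂₃.2, fun n => (h₁₂.3 n).trans (h₂₃.3 n)⟩

lemma of_cons {a : Bool} {w z : List Bool} (h : PrefixDom (a :: w) (a :: z)) : PrefixDom w z where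
  length_eq := by simpa using h.length_eq
  count_eq := by simpa [List.count_cons] using h.count_eq
  antipawnCount_le n := by cases a <;> simpa using h.antipawnCount_le (n + 1)

end PrefixDom

lemma PawnMove.prefixDom {w z : List Bool} (h : PawnMove w z) : PrefixDom w z := by
  obtain ⟨u, v, rfl, rfl⟩ := h
  refine ⟨by simp, by simp, fun n => ?_⟩
  simp only [List.append_assoc, List.cons_append, List.nil_append]
  rcases le_or_gt n u.length with hn | hn
  · rw [antipawnCount_append_of_le _ hn, antipawnCount_append_of_le _ hn]
  · obtain ⟨m, rfl⟩ := Nat.exists_eq_add_of_le hn.le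
    rw [antipawnCount_append_length_add, antipawnCount_append_length_add]
    rcases m with _ | _ | m <;> simp

lemma Reach.prefixDom {w z : List Bool} (h : Reach w z) : PrefixDom w z := by
  induction h with
  | refl => exact .refl w
  | tail _ hmove ih => exact ih.trans hmove.prefixDom

lemma Reach.cons (a : Bool) {w z : List Bool} (h : Reach w z) : Reach (a :: w) (a :: z) :=
  Relation.ReflTransGen.lift (a :: ·)
    (fun _ _ ⟨u, v, hw, hz⟩ => ⟨a :: u, v, by simp [hw], by simp [hz]⟩) _ _ h

lemma reach_replicate_true_append (k : ℕ) (r : List Bool) :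
    Reach (List.replicate k true ++ false :: r) (false :: (List.replicate k true ++ r)) := by
  induction k with
  | zero => exact .refl
  | succ k ih => exact (ih.cons true).tail ⟨[], List.replicate k true ++ r, rfl, rfl⟩

lemma exists_eq_replicate_true_append {w : List Bool} (hw : false ∈ w) :
    ∃ k r, w = List.replicate k true ++ false :: r := by
  induction w with
  | nil => simp at hw
  | cons a w ih =>
    cases a with
    | false => exact ⟨0, w, rfl⟩
    | true =>
      obtain ⟨k, r, rfl⟩ := ih (by simpa using hw)
      exact ⟨k + 1, r, rfl⟩

lemma PrefixDom.reach {w z : List Bool} (h : PrefixDom w z) : Reach w z := by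
  induction z generalizing w with
  | nil =>
    obtain rfl := List.length_eq_zero_iff.mp h.length_eq
    exact .refl
  | cons c z ih =>
    obtain _ | ⟨a, w⟩ := w
    · simpa using h.length_eq
    obtain rfl | hac := eq_or_ne a c
    · exact (ih h.of_cons).cons a
    obtain ⟨rfl, rfl⟩ : a = true ∧ c = false := by
      have := h.antipawnCount_le 1
      cases a <;> cases c <;> simp_all
    -- pull the first anti-pawn of `true :: w` to the front, after which the heads agree
    have hmem : false ∈ w := List.count_pos_iff.mp (by have := h.count_eq; grind)
    obtain ⟨k, r, rfl⟩ := exists_eq_replicate_true_append hmem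
    have hdom : PrefixDom (List.replicate (k + 1) true ++ r) z := by
      refine ⟨by have := h.length_eq; grind, by have := h.count_eq; grind, fun n => ?_⟩
      have hn := h.antipawnCount_le (n + 1)
      simp only [antipawnCount_true_cons, antipawnCount_false_cons,
        antipawnCount_replicate_true_append] at hn ⊢
      rcases le_or_gt n k with hnk | hnk
      · simp [Nat.sub_eq_zero_of_le (Nat.le_succ_of_le hnk)]
      · rw [show n - k = n - (k + 1) + 1 by omega, antipawnCount_false_cons] at hn
        omega
    exact (reach_replicate_true_append (k + 1) r).trans ((ih hdom).cons false)

theorem reach_iff_prefixDom {w z : List Bool} : Reach w z ↔ PrefixDom w z :=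
  ⟨Reach.prefixDom, PrefixDom.reach⟩

lemma PrefixDom.insert_false {u v s t : List Bool} (hcount : s.count false < u.count false)
    (h : PrefixDom (u ++ v) (s ++ false :: t)) :
    PrefixDom (u ++ false :: v) (s ++ false :: false :: t) := by
  have hsu : s.length ≤ u.length := by
    by_contra! hlt
    have hle := h.antipawnCount_le s.length
    have hmono := antipawnCount_mono (u ++ v) hlt.le
    rw [antipawnCount_append_length] at hle hmono
    omega
  refine ⟨by have := h.length_eq; grind, by have := h.count_eq; grind, fun n => ?_⟩
  rcases le_or_gt n u.length with hn | hn
  · rw [antipawnCount_insert_of_le _ hn]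
    exact (h.antipawnCount_le n).trans (antipawnCount_le_insert s (false :: t) n)
  · obtain ⟨m, rfl⟩ := Nat.exists_eq_add_of_lt hn
    rw [antipawnCount_insert_succ _ (by omega), antipawnCount_insert_succ (false :: t) (by omega)]
    exact Nat.add_le_add_right (h.antipawnCount_le _) 1

lemma PrefixDom.of_insert_false {u v s t : List Bool} (hus : u.count false = s.count false + 1)
    (h : PrefixDom (u ++ false :: v) (s ++ false :: false :: t)) :
    PrefixDom (u ++ v) (s ++ false :: t) := by
  have hsu : s.length ≤ u.length := by
    by_contra! hlt
    replace hlt : u.length + 1 ≤ s.length := hlt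
    have hle := h.antipawnCount_le (u.length + 1)
    rw [antipawnCount_insert_succ _ le_rfl, antipawnCount_append_length,
      antipawnCount_insert_of_le (false :: t) hlt, antipawnCount_append_of_le _ hlt] at hle
    have := antipawnCount_le_count s (u.length + 1)
    omega
  refine ⟨by have := h.length_eq; grind, by have := h.count_eq; grind, fun n => ?_⟩
  rcases le_or_gt n s.length with hns | hns
  · rw [← antipawnCount_insert_of_le _ (hns.trans hsu),
      ← antipawnCount_insert_of_le (false :: t) hns]
    exact h.antipawnCount_le n
  rcases le_or_gt n u.length with hnu | hnu
  · calc antipawnCount (u ++ v) n ≤ antipawnCount (u ++ v) u.length := antipawnCount_mono _ hnu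
      _ = antipawnCount (s ++ false :: t) (s.length + 1) := by
        rw [antipawnCount_append_length, antipawnCount_append_length_add,
          antipawnCount_false_cons, hus, antipawnCount_zero]
      _ ≤ antipawnCount (s ++ false :: t) n := antipawnCount_mono _ hns
  · have hle := h.antipawnCount_le (n + 1)
    rw [antipawnCount_insert_succ _ hnu.le,
      antipawnCount_insert_succ (false :: t) (by omega)] at hle
    omega

lemma prefixDom_insert_false_iff {u v s t : List Bool} (hus : u.count false = s.count false + 1) :
    PrefixDom (u ++ v) (s ++ false :: t) ↔
      PrefixDom (u ++ false :: v) (s ++ false :: false :: t) :=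
  ⟨.insert_false (by omega), .of_insert_false hus⟩

lemma List.exists_eq_append_cons_count_eq {α : Type*} [BEq α] [LawfulBEq α] {b : α} :
    ∀ {w : List α} {i : ℕ}, i < w.count b → ∃ u v, w = u ++ b :: v ∧ u.count b = i
  | [], _, h => by simp at h
  | a :: w, i, h => by
    by_cases hab : a = b
    · subst hab
      rcases i with _ | i
      · exact ⟨[], w, rfl, rfl⟩
      · obtain ⟨u, v, rfl, hu⟩ :=
          exists_eq_append_cons_count_eq (w := w) (i := i) (by simpa using h)
        exact ⟨a :: u, v, rfl, by simpa using hu⟩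
    · obtain ⟨u, v, rfl, hu⟩ := exists_eq_append_cons_count_eq (w := w) (i := i)
        (by simpa [List.count_cons, hab] using h)
      exact ⟨a :: u, v, rfl, by simpa [List.count_cons, hab] using hu⟩

lemma delOcc_eq_none_of_count_lt (b : Bool) :
    ∀ {i : ℕ} {w : List Bool}, w.count b < i → delOcc b i w = none
  | _, [], _ => rfl
  | i, a :: w, h => by
    by_cases hab : a = b
    · subst hab
      have hw : w.count a < i - 1 := by simp at h; omega
      simp [delOcc, show i ≠ 1 by omega, delOcc_eq_none_of_count_lt a hw]
    · have hw : w.count b < i := by simpa [List.count_cons, hab] using h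
      simp [delOcc, hab, delOcc_eq_none_of_count_lt b hw]

lemma delOcc_count_add_one (b : Bool) (u v : List Bool) :
    delOcc b (u.count b + 1) (u ++ b :: v) = some (u ++ v) := by
  induction u with
  | nil => simp [delOcc]
  | cons a u ih => by_cases hab : a = b <;> simp [delOcc, hab, ih]

lemma dblOcc_count_add_one (b : Bool) (s t : List Bool) :
    dblOcc b (s.count b + 1) (s ++ b :: t) = some (s ++ b :: b :: t) := by
  induction s with
  | nil => simp [dblOcc]
  | cons a s ih => by_cases hab : a = b <;> simp [dblOcc, hab, ih]

lemma pairing_append_insert_false {u v s t : List Bool}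
    (hus : u.count false = s.count false + 1) :
    pairing (u ++ v) (s ++ false :: t) = pairing (u ++ false :: v) (s ++ false :: false :: t) := by
  unfold pairing
  rw [reach_iff_prefixDom, reach_iff_prefixDom, prefixDom_insert_false_iff hus]

/-- The `*`-adjoint of deleting the `(i+1)`-th anti-pawn is doubling the
`i`-th anti-pawn: `⟨a_{q,i+1} x | y⟩ = ⟨x | a_{q,i}† y⟩`. -/
theorem del_dbl_antipawn_adjoint (i : ℕ) (hi : 1 ≤ i) (y : List Bool)
    (hy : i ≤ y.count false) (x : List Bool) :
    pairingO (delOcc false (i + 1) x) (some y) = pairingO (some x) (dblOcc false i y) := by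
  obtain ⟨j, rfl⟩ : ∃ j, i = j + 1 := ⟨i - 1, by omega⟩
  obtain ⟨s, t, rfl, rfl⟩ := List.exists_eq_append_cons_count_eq (b := false) hy
  rw [dblOcc_count_add_one]
  by_cases hx : s.count false + 1 < x.count false
  · obtain ⟨u, v, rfl, hu⟩ := List.exists_eq_append_cons_count_eq (b := false) hx
    rw [← hu, delOcc_count_add_one]
    exact pairing_append_insert_false hu
  · rw [delOcc_eq_none_of_count_lt false (by omega)]
    have hunreach : ¬Reach x (s ++ false :: false :: t) := fun h => by
      have := h.prefixDom.count_eq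
      simp only [List.count_append, List.count_cons_self] at this
      omega
    simp [pairingO, pairing, hunreach]
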